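/- arXiv:1901.02803 — 2 statements merged into one kernel-verified Lean document; each statement's English description precedes it below -/
import Mathlib

section
/- Let G be a finite group, ℓ a prime, and Z a central subgroup of G whose order is not divisible by ℓ; write Ḡ = G/Z and let π : G → Ḡ be the canonical projection. If R is an ℓ-radical subgroup of G, then the normalizer of π(R) in Ḡ equals the image π(N_G(R)) of the normalizer of R in G. -/
/-- The `ℓ`-core `O_ℓ(G)` of a finite group `G`: the largest normal `ℓ`-subgroup of `G`,
realized as the join of all normal `ℓ`-subgroups. -/
def pCore (ℓ : ℕ) (G : Type) [Group G] : Subgroup G :=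
  sSup {N : Subgroup G | N.Normal ∧ IsPGroup ℓ ↥N}

/-- The `ℓ`-core of a subgroup `H` of `G`, viewed again as a subgroup of `G`. -/
def pCoreOf (ℓ : ℕ) {G : Type} [Group G] (H : Subgroup G) : Subgroup G :=
  Subgroup.map H.subtype (pCore ℓ ↥H)

/-- A subgroup `R` of `G` is `ℓ`-radical if `R = O_ℓ(N_G(R))`. -/
def IsRadicalSubgroup (ℓ : ℕ) {G : Type} [Group G] (R : Subgroup G) : Prop :=
  R = pCoreOf ℓ (Subgroup.normalizer (R : Set G))

/-!
If `π g` normalizes `π R`, then `g` normalizes the full preimage `R Z`. Since `Z` is central of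
order prime to `ℓ`, the `ℓ`-elements of `R Z` are exactly the elements of the `ℓ`-group `R`, a
property preserved by conjugation; hence `g` normalizes `R`.
-/

theorem isPGroup_pCore (ℓ : ℕ) (G : Type) [Group G] [Finite G] : IsPGroup ℓ (pCore ℓ G) := by
  have hsup : SupClosed {N : Subgroup G | N.Normal ∧ IsPGroup ℓ N} := by
    rintro A ⟨hA, hAℓ⟩ B ⟨hB, hBℓ⟩
    exact ⟨Subgroup.sup_normal A B, hAℓ.to_sup_of_normal_right hBℓ⟩
  exact (hsup.sSup_mem (Set.toFinite _) ⟨inferInstance, IsPGroup.of_bot⟩ subset_rfl).2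

theorem IsRadicalSubgroup.isPGroup {ℓ : ℕ} {G : Type} [Group G] [Finite G] {R : Subgroup G}
    (hR : IsRadicalSubgroup ℓ R) : IsPGroup ℓ R := by
  rw [hR]
  exact (isPGroup_pCore ℓ _).map _

namespace Subgroup

variable {G : Type*} [Group G] {ℓ : ℕ} {R Z : Subgroup G}

theorem normal_of_le_center (hZ : Z ≤ center G) : Z.Normal :=
  ⟨fun z hz g => by rwa [mem_center_iff.mp (hZ hz) g, mul_inv_cancel_right]⟩

theorem eq_one_of_pow_prime_pow_eq_one (hℓ : ℓ.Prime) (hZℓ : ¬ ℓ ∣ Nat.card Z) {z : G}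
    (hz : z ∈ Z) {n : ℕ} (hzn : z ^ ℓ ^ n = 1) : z = 1 := by
  have hcop : (ℓ ^ n).Coprime (Nat.card Z) := ((hℓ.coprime_iff_not_dvd).2 hZℓ).pow_left n
  exact orderOf_eq_one_iff.mp <|
    Nat.eq_one_of_dvd_coprimes hcop (orderOf_dvd_of_pow_eq_one hzn) (orderOf_dvd_natCard Z hz)

theorem mem_iff_mem_sup_center_and_pow_eq_one (hℓ : ℓ.Prime) (hR : IsPGroup ℓ R)
    (hZ : Z ≤ center G) (hZℓ : ¬ ℓ ∣ Nat.card Z) {x : G} :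
    x ∈ R ↔ x ∈ R ⊔ Z ∧ ∃ k : ℕ, x ^ ℓ ^ k = 1 := by
  refine ⟨fun hx => ⟨mem_sup_left hx, ?_⟩, ?_⟩
  · obtain ⟨k, hk⟩ := hR ⟨x, hx⟩
    exact ⟨k, congrArg Subtype.val hk⟩
  · rintro ⟨hx, k, hxk⟩
    have := normal_of_le_center hZ
    obtain ⟨r, hr, z, hz, rfl⟩ := mem_sup_of_normal_right.mp hx
    obtain ⟨m, hrm⟩ := hR ⟨r, hr⟩
    replace hrm : r ^ ℓ ^ m = 1 := congrArg Subtype.val hrm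
    have hrz : Commute r z := mem_center_iff.mp (hZ hz) r
    have hz1 : z ^ ℓ ^ (k + m) = 1 := by
      have hx1 : (r * z) ^ ℓ ^ (k + m) = 1 := by rw [pow_add, pow_mul, hxk, one_pow]
      have hr1 : r ^ ℓ ^ (k + m) = 1 := by rw [pow_add, mul_comm, pow_mul, hrm, one_pow]
      rwa [hrz.mul_pow, hr1, one_mul] at hx1
    rwa [eq_one_of_pow_prime_pow_eq_one hℓ hZℓ hz hz1, mul_one]

theorem normalizer_sup_center_le (hℓ : ℓ.Prime) (hR : IsPGroup ℓ R) (hZ : Z ≤ center G)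
    (hZℓ : ¬ ℓ ∣ Nat.card Z) : normalizer ((R ⊔ Z : Subgroup G) : Set G) ≤ normalizer R := by
  intro g hg
  rw [mem_normalizer_iff]
  intro x
  simp only [mem_iff_mem_sup_center_and_pow_eq_one hℓ hR hZ hZℓ, ← mem_normalizer_iff.mp hg x,
    conj_pow, conj_eq_one_iff]

end Subgroup

theorem statement1 (G : Type) [Group G] [Finite G] (ℓ : ℕ) (hℓ : ℓ.Prime)
    (Z : Subgroup G) [Z.Normal] (hZc : Z ≤ Subgroup.center G)
    (hZℓ : ¬ ℓ ∣ Nat.card Z) (R : Subgroup G) (hR : IsRadicalSubgroup ℓ R) :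
    Subgroup.normalizer ((Subgroup.map (QuotientGroup.mk' Z) R : Subgroup (G ⧸ Z)) : Set (G ⧸ Z))
      = Subgroup.map (QuotientGroup.mk' Z) (Subgroup.normalizer (R : Set G)) := by
  set π := QuotientGroup.mk' Z
  have hπ : Function.Surjective π := QuotientGroup.mk'_surjective Z
  refine le_antisymm ?_ (Subgroup.le_normalizer_map π)
  open Subgroup in
  calc normalizer (map π R : Set (G ⧸ Z))
      = map π (comap π (normalizer (map π R : Set (G ⧸ Z)))) :=
        (map_comap_eq_self_of_surjective hπ _).symm
    _ = map π (normalizer ((R ⊔ Z : Subgroup G) : Set G)) := by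
        rw [comap_normalizer_eq_of_surjective _ hπ, comap_map_eq, QuotientGroup.ker_mk']
    _ ≤ map π (normalizer R) := map_mono (normalizer_sup_center_le hℓ hR.isPGroup hZc hZℓ)
end

section
/- Let G be a finite group, ℓ a prime, and Z a central subgroup of G whose order is not divisible by ℓ; write Ḡ = G/Z with canonical projection π. If (R̄, φ̄) is an ℓ-weight of Ḡ, then (R, φ) is an ℓ-weight of G, where R = O_ℓ(π⁻¹(R̄)) and φ is the inflation of φ̄ to N_G(R), i.e. φ(g) = φ̄(π(g)) for g ∈ N_G(R) (this is well defined since π(N_G(R)) = N_{Ḡ}(R̄)). -/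
open scoped Classical

/-- `χ : G → ℂ` is an irreducible (complex) character of `G`: it is the character of some
simple finite-dimensional complex representation of `G`. -/
def IsIrrChar (G : Type) [Monoid G] (χ : G → ℂ) : Prop :=
  ∃ V : FDRep ℂ G, CategoryTheory.Simple V ∧ ∀ g : G, χ g = FDRep.character V g

/-- The usual inner product of class functions on a finite group `L`. -/
noncomputable def charInner (L : Type) (α β : L → ℂ) : ℂ :=
  (Nat.card L : ℂ)⁻¹ * ∑ᶠ l : L, α l * (starRingEnd ℂ) (β l)

/-- Restriction of a character of a subgroup `B` of `H` to a smaller subgroup `A ≤ B`. -/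
def restrictChar {H : Type} [Group H] {A B : Subgroup H} (h : A ≤ B) (χ : ↥B → ℂ) :
    ↥A → ℂ :=
  fun a => χ ⟨↑a, h a.2⟩

/-- A character `χ` of `H` lies over a character `θ` of a subgroup `A ≤ H` if `θ` is a
constituent of the restriction of `χ` to `A`. -/
def liesOver {H : Type} [Group H] (A : Subgroup H) (χ : H → ℂ) (θ : ↥A → ℂ) : Prop :=
  charInner ↥A (fun a : ↥A => χ ↑a) θ ≠ 0

/-- `(R, φ)` is an `ℓ`-weight of `G`: `R` is an `ℓ`-subgroup of `G` and `φ` is an irreducible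
complex character of `N_G(R)` whose kernel contains `R` and which has `ℓ`-defect zero viewed as
a character of `N_G(R)/R`, i.e. `|N_G(R)/R|/φ(1)` is not divisible by `ℓ`. -/
def IsWeight (ℓ : ℕ) {G : Type} [Group G] (R : Subgroup G) (φ : ↥(Subgroup.normalizer (R : Set G)) → ℂ) : Prop :=
  IsPGroup ℓ ↥R ∧ IsIrrChar ↥(Subgroup.normalizer (R : Set G)) φ ∧
  (∀ (r : G) (hr : r ∈ R), φ ⟨r, Subgroup.le_normalizer hr⟩ = φ 1) ∧
  ∃ d m : ℕ, ¬ ℓ ∣ m ∧ φ 1 = (d : ℂ) ∧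
    Nat.card ↥(Subgroup.normalizer (R : Set G)) = m * d * Nat.card ↥R

/-- The stabilizer (as a set) of a character `φ` of a normal subgroup `L` of `H` under the
conjugation action of `H` on `Irr(L)`. -/
def charStab {H : Type} [Group H] (L : Subgroup H) (φ : ↥L → ℂ) : Set H :=
  {h : H | ∀ (l : ↥L) (hl : h * ↑l * h⁻¹ ∈ L), φ ⟨h * ↑l * h⁻¹, hl⟩ = φ l}

/-- The character of `M` induced from a character `ψ` of a subgroup `U ≤ M`. -/
noncomputable def inducedChar {M : Type} [Group M] (U : Subgroup M) (ψ : ↥U → ℂ) : M → ℂ :=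
  fun g => (Nat.card ↥U : ℂ)⁻¹ *
    ∑ᶠ x : M, if h : x * g * x⁻¹ ∈ U then ψ ⟨x * g * x⁻¹, h⟩ else 0


/-!
The preimage `H = π⁻¹(R̄)` is a central extension of the `ℓ`-group `R̄` by the `ℓ'`-group `Z`,
hence nilpotent, so `R = O_ℓ(H)` is its unique Sylow `ℓ`-subgroup. By coprimality `R ∩ Z = 1`, and
comparing orders shows that `π` maps `R` isomorphically onto `R̄`. As `R` contains every
`ℓ`-subgroup of `H`, whatever normalizes `H` normalizes `R`; hence `N_G(R) = π⁻¹(N_Ḡ(R̄))`. So `φ`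
is the inflation of `φ̄` along a surjection `N_G(R) → N_Ḡ(R̄)` with kernel `Z`: it is irreducible
(the norm of its character is still `1`), trivial on `R`, and
`|N_G(R)/R| = |Z| · |N_Ḡ(R̄)/R̄|` with `ℓ ∤ |Z|`.
-/

universe u

open Subgroup QuotientGroup

theorem MonoidHom.sum_comp_of_surjective {M N A : Type*} [Group M] [Group N] [Fintype M]
    [Fintype N] [AddCommMonoid A] (q : M →* N) (hq : Function.Surjective q) (F : N → A) :
    ∑ g, F (q g) = Nat.card q.ker • ∑ b, F b := by
  classical
  have hfiber : ∀ b, Finset.card {g | q g = b} = Nat.card q.ker := fun b => by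
    rw [MonoidHom.card_fiber_eq_of_mem_range q (hq b) ⟨1, map_one q⟩, ← Fintype.card_subtype,
      ← Nat.card_eq_fintype_card]
    rfl
  rw [Finset.sum_comp, Finset.smul_sum, Finset.image_univ_of_surjective hq]
  simp only [hfiber]

theorem FDRep.simple_comp_of_surjective {k : Type u} [Field k] [IsAlgClosed k] [CharZero k]
    {M N : Type u} [Group M] [Group N] [Finite M] [Finite N] {q : M →* N}
    (hq : Function.Surjective q) {W : FDRep k N} (hW : CategoryTheory.Simple W) :
    CategoryTheory.Simple (FDRep.of (W.ρ.comp q)) := by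
  have := Fintype.ofFinite M
  have := Fintype.ofFinite N
  rw [FDRep.simple_iff_char_is_norm_one] at hW ⊢
  have hchar : ∀ g, (FDRep.of (W.ρ.comp q)).character g = W.character (q g) := fun _ => rfl
  simp only [hchar, map_inv]
  rw [q.sum_comp_of_surjective hq (fun b => W.character b * W.character b⁻¹), hW, nsmul_eq_mul,
    ← Nat.cast_mul, mul_comm,
    ← Nat.card_congr (QuotientGroup.quotientKerEquivOfSurjective q hq).toEquiv,
    ← Subgroup.card_eq_card_quotient_mul_card_subgroup]

theorem Subgroup.card_comap_of_surjective {G Q : Type*} [Group G] [Group Q] [Finite G]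
    {f : G →* Q} (hf : Function.Surjective f) (B : Subgroup Q) :
    Nat.card (B.comap f) = Nat.card B * Nat.card f.ker := by
  have : Finite Q := Finite.of_surjective f hf
  have hG : Nat.card G = Nat.card Q * Nat.card f.ker := by
    rw [← Nat.card_congr (QuotientGroup.quotientKerEquivOfSurjective f hf).toEquiv,
      ← Subgroup.card_eq_card_quotient_mul_card_subgroup]
  have h := (B.comap f).card_mul_index
  rw [index_comap_of_surjective B hf, hG, ← B.card_mul_index] at h
  exact Nat.eq_of_mul_eq_mul_right (Nat.pos_of_ne_zero index_ne_zero_of_finite) (h.trans (by ring))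

theorem Subgroup.isNilpotent_comap_of_ker_le_center {G Q : Type*} [Group G] [Group Q]
    {f : G →* Q} (hf : f.ker ≤ center G) (B : Subgroup Q) [Group.IsNilpotent B] :
    Group.IsNilpotent (B.comap f) := by
  refine isNilpotent_of_ker_le_center (f.subgroupComap B) fun x hx => ?_
  have hx' : (x : G) ∈ f.ker := congrArg Subtype.val hx
  exact mem_center_iff.mpr fun y => Subtype.ext (mem_center_iff.mp (hf hx') y)

section pCore

variable {ℓ : ℕ}

theorem pCoreOf_le {G : Type} [Group G] (H : Subgroup G) : pCoreOf ℓ H ≤ H := map_subtype_le _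

variable [Fact ℓ.Prime]

theorem pCore_eq_sylow {K : Type} [Group K] [Finite K] [Group.IsNilpotent K] (P : Sylow ℓ K) :
    pCore ℓ K = P := by
  have := Sylow.unique_of_normal P inferInstance
  refine le_antisymm (sSup_le ?_) (le_sSup ⟨inferInstance, P.isPGroup'⟩)
  rintro N ⟨-, hN⟩
  obtain ⟨Q, hQ⟩ := hN.exists_le_sylow
  rwa [Subsingleton.elim Q P] at hQ

variable {G : Type} [Group G] {H : Subgroup G} [Finite H] [Group.IsNilpotent H]

theorem pCoreOf_eq_map_sylow (P : Sylow ℓ H) : pCoreOf ℓ H = (P : Subgroup H).map H.subtype := by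
  rw [pCoreOf, pCore_eq_sylow P]

theorem isPGroup_pCoreOf : IsPGroup ℓ (pCoreOf ℓ H) := by
  obtain ⟨P⟩ : Nonempty (Sylow ℓ H) := inferInstance
  rw [pCoreOf_eq_map_sylow P]
  exact P.isPGroup'.map _

theorem card_pCoreOf : Nat.card (pCoreOf ℓ H) = ℓ ^ (Nat.card H).factorization ℓ := by
  obtain ⟨P⟩ : Nonempty (Sylow ℓ H) := inferInstance
  rw [pCoreOf_eq_map_sylow P, card_map_of_injective H.subtype_injective, P.card_eq_multiplicity]

theorem le_pCoreOf {Q : Subgroup G} (hQ : IsPGroup ℓ Q) (hQH : Q ≤ H) : Q ≤ pCoreOf ℓ H := by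
  obtain ⟨P⟩ : Nonempty (Sylow ℓ H) := inferInstance
  have := Sylow.unique_of_normal P inferInstance
  obtain ⟨P', hP'⟩ := (hQ.comap_subtype (K := H)).exists_le_sylow
  rw [Subsingleton.elim P' P] at hP'
  rw [pCoreOf_eq_map_sylow P, ← inf_of_le_left hQH, ← subgroupOf_map_subtype]
  exact map_mono hP'

theorem normalizer_le_normalizer_pCoreOf :
    normalizer (H : Set G) ≤ normalizer (pCoreOf ℓ H : Set G) := by
  have hconj : ∀ n ∈ normalizer (H : Set G), ∀ x ∈ pCoreOf ℓ H, n * x * n⁻¹ ∈ pCoreOf ℓ H := by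
    intro n hn x hx
    have hle : (pCoreOf ℓ H).map (MulAut.conj n).toMonoidHom ≤ pCoreOf ℓ H := by
      refine le_pCoreOf (isPGroup_pCoreOf.map _) ?_
      rintro _ ⟨y, hy, rfl⟩
      exact (mem_normalizer_iff.mp hn y).mp (pCoreOf_le H hy)
    exact hle ⟨x, hx, rfl⟩
  intro n hn
  refine mem_normalizer_iff.mpr fun x => ⟨hconj n hn x, fun hx => ?_⟩
  simpa [mul_assoc] using hconj n⁻¹ (inv_mem hn) _ hx

end pCore

section CentralQuotient

variable {G : Type} [Group G] [Finite G] {ℓ : ℕ} [Fact ℓ.Prime] {Z : Subgroup G} [Z.Normal]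
  {B : Subgroup (G ⧸ Z)}

theorem isNilpotent_comap_mk' (hZc : Z ≤ center G) (hB : IsPGroup ℓ B) :
    Group.IsNilpotent (B.comap (mk' Z)) :=
  have : Group.IsNilpotent B := hB.isNilpotent
  isNilpotent_comap_of_ker_le_center (by rwa [ker_mk']) B

theorem card_pCoreOf_comap_mk' (hZc : Z ≤ center G) (hZℓ : ¬ ℓ ∣ Nat.card Z)
    (hB : IsPGroup ℓ B) : Nat.card (pCoreOf ℓ (B.comap (mk' Z))) = Nat.card B := by
  have := isNilpotent_comap_mk' hZc hB
  have hℓ : ℓ.Prime := Fact.out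
  obtain ⟨k, hk⟩ := IsPGroup.iff_card.mp hB
  rw [card_pCoreOf, card_comap_of_surjective (mk'_surjective Z), ker_mk', hk,
    Nat.factorization_mul (pow_ne_zero _ hℓ.ne_zero) Nat.card_pos.ne']
  simp [hℓ.factorization_pow, Nat.factorization_eq_zero_of_not_dvd hZℓ]

theorem map_pCoreOf_comap_mk' (hZc : Z ≤ center G) (hZℓ : ¬ ℓ ∣ Nat.card Z)
    (hB : IsPGroup ℓ B) : (pCoreOf ℓ (B.comap (mk' Z))).map (mk' Z) = B := by
  set R := pCoreOf ℓ (B.comap (mk' Z))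
  have hcard := card_pCoreOf_comap_mk' hZc hZℓ hB
  have hRZ : Disjoint R Z := by
    obtain ⟨k, hk⟩ := IsPGroup.iff_card.mp hB
    refine disjoint_of_coprime_natCard ?_
    rw [hcard, hk]
    exact Nat.Coprime.pow_left k ((Nat.Prime.coprime_iff_not_dvd Fact.out).mpr hZℓ)
  have hinj : Set.InjOn (mk' Z) R := (Set.injOn_iff_map_eq_one _ R).mpr fun a ha ha1 =>
    disjoint_def.mp hRZ ha ((QuotientGroup.eq_one_iff a).mp ha1)
  refine eq_of_le_of_card_ge (map_le_iff_le_comap.mpr (pCoreOf_le _)) ?_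
  exact ((Nat.card_image_of_injOn hinj).trans hcard).ge

theorem normalizer_pCoreOf_comap_mk' (hZc : Z ≤ center G) (hZℓ : ¬ ℓ ∣ Nat.card Z)
    (hB : IsPGroup ℓ B) :
    normalizer (pCoreOf ℓ (B.comap (mk' Z)) : Set G) =
      (normalizer (B : Set (G ⧸ Z))).comap (mk' Z) := by
  refine le_antisymm (fun n hn => ?_) ?_
  · have := le_normalizer_map (mk' Z) ⟨n, hn, rfl⟩
    rwa [map_pCoreOf_comap_mk' hZc hZℓ hB] at this
  · have := isNilpotent_comap_mk' hZc hB
    exact (le_normalizer_comap _).trans normalizer_le_normalizer_pCoreOf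

end CentralQuotient

theorem statement4 (G : Type) [Group G] [Finite G] (ℓ : ℕ) (hℓ : ℓ.Prime)
    (Z : Subgroup G) [Z.Normal] (hZc : Z ≤ Subgroup.center G)
    (hZℓ : ¬ ℓ ∣ Nat.card Z)
    (Rbar : Subgroup (G ⧸ Z)) (φbar : ↥(Subgroup.normalizer (Rbar : Set (G ⧸ Z))) → ℂ)
    (hw : IsWeight ℓ Rbar φbar)
    (R : Subgroup G) (hR : R = pCoreOf ℓ (Subgroup.comap (QuotientGroup.mk' Z) Rbar))
    (φ : ↥(Subgroup.normalizer (R : Set G)) → ℂ)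
    (hφ : ∀ (n : ↥(Subgroup.normalizer (R : Set G))) (h : QuotientGroup.mk' Z ↑n ∈ (Subgroup.normalizer (Rbar : Set (G ⧸ Z)))),
      φ n = φbar ⟨QuotientGroup.mk' Z ↑n, h⟩) :
    IsWeight ℓ R φ := by
  have : Fact ℓ.Prime := ⟨hℓ⟩
  subst hR
  obtain ⟨hRbar, ⟨V, hV, hVchar⟩, hker, d, m, hm, hd, hcard⟩ := hw
  have := isNilpotent_comap_mk' hZc hRbar
  have hN := normalizer_pCoreOf_comap_mk' hZc hZℓ hRbar
  let q := ((mk' Z).subgroupComap _).comp (MulEquiv.subgroupCongr hN).toMonoidHom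
  have hq : Function.Surjective q :=
    ((mk' Z).subgroupComap_surjective_of_surjective _ (mk'_surjective Z)).comp
      (MulEquiv.subgroupCongr hN).surjective
  have hφq : ∀ n, φ n = φbar (q n) := fun n => hφ n _
  have hφ1 : φ 1 = φbar 1 := hφq 1
  refine ⟨isPGroup_pCoreOf,
    ⟨FDRep.of (V.ρ.comp q), FDRep.simple_comp_of_surjective hq hV,
      fun n => (hφq n).trans (hVchar _)⟩,
    fun r hr => (hφq _).trans ((hker _ (mem_comap.mp (pCoreOf_le _ hr))).trans hφ1.symm),
    d, Nat.card Z * m, (Nat.Prime.dvd_mul hℓ).not.mpr (not_or.mpr ⟨hZℓ, hm⟩), hφ1 ▸ hd, ?_⟩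
  rw [hN, card_comap_of_surjective (mk'_surjective Z), ker_mk', hcard,
    card_pCoreOf_comap_mk' hZc hZℓ hRbar]
  ring
end
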